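/- arXiv:1704.00600 — 3 statements merged into one kernel-verified Lean document; each statement's English description precedes it below -/
import Mathlib

section
/- Let t, x1, v be rational numbers with t ≠ 0. If v^2 = (17/3)·t^4 + (5/3)·t^2 + 5/3, then (t+x1)^5 + (t-1)^5 + (2t)^5 evaluated with x1 = 1, i.e., (t+1)^5 + (t-1)^5 + (2t)^5 = (t+v)^3 + (t-v)^3 + (2t)^3. -/
theorem stmt_8_general (t v : ℚ)
    (h : v^2 = (17/3) * t^4 + (5/3) * t^2 + 5/3) :
    (t + 1)^5 + (t - 1)^5 + (2*t)^5 = (t + v)^3 + (t - v)^3 + (2*t)^3 := by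
  linear_combination (-6*t) * h

theorem stmt_8 (t v : ℚ) (ht : t ≠ 0)
    (h : v^2 = (17/3) * t^4 + (5/3) * t^2 + 5/3) :
    (t + 1)^5 + (t - 1)^5 + (2*t)^5 = (t + v)^3 + (t - v)^3 + (2*t)^3 :=
  stmt_8_general t v h
end

section
/- For rational numbers t, v with v^2 = (5/9)·t^4 + (47/9)·t^2 + 25/9, we have 5·((t+1)^5 + (t-1)^5) = 3·((t+v)^3 + (t-v)^3). -/
theorem stmt_11 (t v : ℚ) (h : v^2 = (5/9) * t^4 + (47/9) * t^2 + 25/9) :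
    5 * ((t + 1)^5 + (t - 1)^5) = 3 * ((t + v)^3 + (t - v)^3) := by
  linear_combination (-18 * t) * h
end

section
/- For all rationals t, v, and parameters x1, x2, y2, n, m with m ≠ 0: if v^2 = (2n/(3m))·t^4 + ((10n·x1^2 + 10n·x2^2 - 2m)/(3m))·t^2 + (5n·x1^4 + 5n·x2^4 - 3m·y2^2)/(3m), then n·((t+x1)^5 + (t-x1)^5 + (t+x2)^5 + (t-x2)^5) = m·((t+v)^3 + (t-v)^3 + (t+y2)^3 + (t-y2)^3). -/
/-! In `(t ± x)^k` the odd powers of `x` cancel, so both sides of the equation are odd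
polynomials in `t` whose only `v`-term is `6 m t v^2`; the curve equation, multiplied by
`6 m t`, is exactly their difference. -/

theorem add_pow_five_add_sub_pow_five {R : Type*} [CommRing R] (t x : R) :
    (t + x)^5 + (t - x)^5 = 2*t^5 + 20*t^3*x^2 + 10*t*x^4 := by
  ring

theorem add_pow_three_add_sub_pow_three {R : Type*} [CommRing R] (t y : R) :
    (t + y)^3 + (t - y)^3 = 2*t^3 + 6*t*y^2 := by
  ring

theorem stmt_14 (t v x1 x2 y2 n m : ℚ) (hm : m ≠ 0)
    (h : v^2 = (2*n/(3*m)) * t^4 + ((10*n*x1^2 + 10*n*x2^2 - 2*m)/(3*m)) * t^2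
      + (5*n*x1^4 + 5*n*x2^4 - 3*m*y2^2)/(3*m)) :
    n * ((t + x1)^5 + (t - x1)^5 + (t + x2)^5 + (t - x2)^5) =
      m * ((t + v)^3 + (t - v)^3 + (t + y2)^3 + (t - y2)^3) := by
  have hcurve : 3*m*v^2 = 2*n*t^4 + (10*n*x1^2 + 10*n*x2^2 - 2*m)*t^2
      + 5*n*x1^4 + 5*n*x2^4 - 3*m*y2^2 := by
    rw [h]
    field_simp
    ring
  simp only [add_pow_five_add_sub_pow_five, add_pow_three_add_sub_pow_three, add_assoc]
  linear_combination -2*t*hcurve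
end
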